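/- arXiv:2310.17182 — 4 statements merged into one kernel-verified Lean document; each statement's English description precedes it below -/
import Mathlib

section
/- For all real numbers a < b and all λ ≥ 0, the integral over (a,b) of e^{-λx} / sqrt((b-x)(x-a)) dx equals e^{-λ(b+a)/2} times the integral over (0,π) of e^{(λ(b-a)/2) cos θ} dθ. -/
open MeasureTheory Real Set

/-! The substitution `x = (a + b)/2 - (b - a)/2 · cos θ` maps `(0, π)` bijectively onto `(a, b)`,
with `dx = (b - a)/2 · sin θ dθ` and `(b - x)(x - a) = ((b - a)/2 · sin θ)²`, so the weight
`1/√((b - x)(x - a))` is exactly absorbed by the Jacobian. -/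

theorem image_sub_mul_cos_Ioo_zero_pi {a b : ℝ} (hab : a < b) :
    (fun θ => (a + b) / 2 - (b - a) / 2 * cos θ) '' Ioo 0 π = Ioo a b := by
  have hcos : cos '' Ioo 0 π = Ioo (-1) 1 := cosPartialHomeomorph.image_source_eq_target
  change ((fun y => (a + b) / 2 - y) ∘ ((b - a) / 2 * ·) ∘ cos) '' Ioo 0 π = Ioo a b
  rw [image_comp, image_comp, hcos, image_mul_left_Ioo (by linarith), image_const_sub_Ioo]
  congr 1 <;> ring

theorem injOn_sub_mul_cos_Ioo_zero_pi {a b : ℝ} (hab : a < b) :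
    InjOn (fun θ => (a + b) / 2 - (b - a) / 2 * cos θ) (Ioo 0 π) := by
  intro x hx y hy h
  refine injOn_cos (Ioo_subset_Icc_self hx) (Ioo_subset_Icc_self hy) ?_
  simpa [sub_ne_zero.mpr hab.ne'] using h

theorem sqrt_sub_mul_sub_sub_mul_cos {a b θ : ℝ} (hab : a ≤ b) (hθ : 0 ≤ sin θ) :
    √((b - ((a + b) / 2 - (b - a) / 2 * cos θ)) * ((a + b) / 2 - (b - a) / 2 * cos θ - a))
      = (b - a) / 2 * sin θ := by
  have hsq : (b - ((a + b) / 2 - (b - a) / 2 * cos θ)) * ((a + b) / 2 - (b - a) / 2 * cos θ - a)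
      = ((b - a) / 2 * sin θ) ^ 2 := by
    linear_combination (-((b - a) / 2) ^ 2) * sin_sq_add_cos_sq θ
  rw [hsq, sqrt_sq (mul_nonneg (by linarith) hθ)]

theorem integral_Ioo_inv_sqrt_smul_eq_integral_sub_mul_cos {E : Type*} [NormedAddCommGroup E]
    [NormedSpace ℝ E] {a b : ℝ} (hab : a < b) (f : ℝ → E) :
    ∫ x in Ioo a b, (√((b - x) * (x - a)))⁻¹ • f x
      = ∫ θ in Ioo 0 π, f ((a + b) / 2 - (b - a) / 2 * cos θ) := by
  have hderiv : ∀ θ ∈ Ioo 0 π, HasDerivWithinAt (fun θ => (a + b) / 2 - (b - a) / 2 * cos θ)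
      ((b - a) / 2 * sin θ) (Ioo 0 π) θ := fun θ _ => by
    simpa using
      (((hasDerivAt_cos θ).const_mul ((b - a) / 2)).const_sub ((a + b) / 2)).hasDerivWithinAt
  rw [← image_sub_mul_cos_Ioo_zero_pi hab, integral_image_eq_integral_abs_deriv_smul
    measurableSet_Ioo hderiv (injOn_sub_mul_cos_Ioo_zero_pi hab)]
  refine setIntegral_congr_fun measurableSet_Ioo fun θ hθ => ?_
  have hsin : 0 < sin θ := sin_pos_of_pos_of_lt_pi hθ.1 hθ.2
  have hjac : 0 < (b - a) / 2 * sin θ := mul_pos (by linarith) hsin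
  rw [sqrt_sub_mul_sub_sub_mul_cos hab.le hsin.le, abs_of_pos hjac, smul_inv_smul₀ hjac.ne']

theorem integral_exp_div_sqrt_eq_general (a b : ℝ) (hab : a < b) (lam : ℝ) :
    (∫ x in Set.Ioo a b, Real.exp (-lam * x) / Real.sqrt ((b - x) * (x - a)))
      = Real.exp (-(lam * (b + a)) / 2)
        * ∫ θ in Set.Ioo 0 Real.pi, Real.exp (lam * (b - a) / 2 * Real.cos θ) := by
  calc (∫ x in Ioo a b, exp (-lam * x) / √((b - x) * (x - a)))
      = ∫ x in Ioo a b, (√((b - x) * (x - a)))⁻¹ • exp (-lam * x) := by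
        simp_rw [smul_eq_mul, div_eq_inv_mul]
    _ = ∫ θ in Ioo 0 π, exp (-lam * ((a + b) / 2 - (b - a) / 2 * cos θ)) :=
        integral_Ioo_inv_sqrt_smul_eq_integral_sub_mul_cos hab _
    _ = ∫ θ in Ioo 0 π, exp (-(lam * (b + a)) / 2) * exp (lam * (b - a) / 2 * cos θ) := by
        congr 1 with θ
        rw [← exp_add]
        ring_nf
    _ = _ := integral_const_mul _ _

theorem integral_exp_div_sqrt_eq (a b : ℝ) (hab : a < b) (lam : ℝ) (hlam : 0 ≤ lam) :
    (∫ x in Set.Ioo a b, Real.exp (-lam * x) / Real.sqrt ((b - x) * (x - a)))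
      = Real.exp (-(lam * (b + a)) / 2)
        * ∫ θ in Set.Ioo 0 Real.pi, Real.exp (lam * (b - a) / 2 * Real.cos θ) :=
  integral_exp_div_sqrt_eq_general a b hab lam
end

section
/- For all real numbers a < b and all λ > 0, the integral over (a,b) of e^{-λx} / sqrt((b-x)(x-a)) dx is at most sqrt(π³ / (4λ(b-a))) · e^{-λa}. -/
open MeasureTheory Real Set

/-!
The substitution `x = a + (b - a) / 2 * (1 - cos θ)` maps `(0, π)` onto `(a, b)` with
`dx = √((b - x) * (x - a)) dθ`, so the integral becomes `∫₀^π exp (-λ x(θ)) dθ`.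
The bound `1 - cos θ ≥ 2 θ² / π²` on `[-π, π]` dominates this integrand by `exp (-λ a)` times a
Gaussian in `θ`, whose integral over `(0, ∞)` gives the constant.
-/

noncomputable def cosParam (a b θ : ℝ) : ℝ := a + (b - a) / 2 * (1 - cos θ)

lemma hasDerivAt_cosParam (a b θ : ℝ) : HasDerivAt (cosParam a b) ((b - a) / 2 * sin θ) θ := by
  have h := (((hasDerivAt_cos θ).const_sub 1).const_mul ((b - a) / 2)).const_add a
  rwa [neg_neg] at h

lemma continuous_cosParam (a b : ℝ) : Continuous (cosParam a b) := by
  unfold cosParam; fun_prop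

lemma sub_cosParam_mul_cosParam_sub (a b θ : ℝ) :
    (b - cosParam a b θ) * (cosParam a b θ - a) = ((b - a) / 2 * sin θ) ^ 2 := by
  unfold cosParam
  linear_combination (-((b - a) / 2) ^ 2) * sin_sq_add_cos_sq θ

lemma strictMonoOn_cosParam {a b : ℝ} (hab : a < b) : StrictMonoOn (cosParam a b) (Icc 0 π) := by
  intro x hx y hy hxy
  have := strictAntiOn_cos hx hy hxy
  unfold cosParam
  gcongr

lemma cosParam_image_Ioo {a b : ℝ} (hab : a < b) : cosParam a b '' Ioo 0 π = Ioo a b := by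
  rw [(continuous_cosParam a b).continuousOn.image_Ioo_of_strictMonoOn pi_pos.le
    (strictMonoOn_cosParam hab)]
  simp only [cosParam, cos_zero, cos_pi]
  ring_nf

theorem setIntegral_Ioo_div_sqrt_eq {a b : ℝ} (hab : a < b) (f : ℝ → ℝ) :
    ∫ x in Ioo a b, f x / √((b - x) * (x - a)) = ∫ θ in Ioo 0 π, f (cosParam a b θ) := by
  rw [← cosParam_image_Ioo hab, integral_image_eq_integral_abs_deriv_smul measurableSet_Ioo
    (fun θ _ => (hasDerivAt_cosParam a b θ).hasDerivWithinAt)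
    ((strictMonoOn_cosParam hab).injOn.mono Ioo_subset_Icc_self)]
  refine setIntegral_congr_fun measurableSet_Ioo fun θ ⟨hθ₀, hθπ⟩ => ?_
  have hjac : 0 < (b - a) / 2 * sin θ := mul_pos (by linarith) (sin_pos_of_pos_of_lt_pi hθ₀ hθπ)
  rw [sub_cosParam_mul_cosParam_sub, sqrt_sq hjac.le, abs_of_pos hjac, smul_eq_mul,
    mul_div_cancel₀ _ hjac.ne']

lemma le_cosParam {a b θ : ℝ} (hab : a ≤ b) (hθ : |θ| ≤ π) :
    a + (b - a) / π ^ 2 * θ ^ 2 ≤ cosParam a b θ :=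
  calc a + (b - a) / π ^ 2 * θ ^ 2 = a + (b - a) / 2 * (2 / π ^ 2 * θ ^ 2) := by ring
    _ ≤ cosParam a b θ := by
      unfold cosParam
      gcongr
      linarith [cos_le_one_sub_mul_cos_sq hθ]

lemma exp_neg_mul_cosParam_le {a b θ lam : ℝ} (hab : a ≤ b) (hlam : 0 ≤ lam) (hθ : |θ| ≤ π) :
    exp (-lam * cosParam a b θ) ≤ exp (-lam * a) * exp (-(lam * (b - a) / π ^ 2) * θ ^ 2) := by
  rw [← exp_add, exp_le_exp]
  linear_combination mul_le_mul_of_nonneg_left (le_cosParam hab hθ) hlam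

lemma setIntegral_exp_neg_mul_sq_le {k : ℝ} (hk : 0 < k) {s : Set ℝ} (hs : s ⊆ Ioi 0) :
    ∫ θ in s, exp (-k * θ ^ 2) ≤ √(π / k) / 2 := by
  rw [← integral_gaussian_Ioi]
  exact setIntegral_mono_set (integrable_exp_neg_mul_sq hk).integrableOn
    (.of_forall fun _ => (exp_pos _).le) hs.eventuallyLE

theorem integral_exp_div_sqrt_le (a b : ℝ) (hab : a < b) (lam : ℝ) (hlam : 0 < lam) :
    (∫ x in Set.Ioo a b, Real.exp (-lam * x) / Real.sqrt ((b - x) * (x - a)))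
      ≤ Real.sqrt (Real.pi ^ 3 / (4 * lam * (b - a))) * Real.exp (-lam * a) := by
  set k := lam * (b - a) / π ^ 2
  have hk : 0 < k := by have := sub_pos.2 hab; positivity
  calc ∫ x in Ioo a b, exp (-lam * x) / √((b - x) * (x - a))
      = ∫ θ in Ioo 0 π, exp (-lam * cosParam a b θ) := setIntegral_Ioo_div_sqrt_eq hab _
    _ ≤ ∫ θ in Ioo 0 π, exp (-lam * a) * exp (-k * θ ^ 2) := by
        refine setIntegral_mono_on ?_ ((integrable_exp_neg_mul_sq hk).const_mul _).integrableOn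
          measurableSet_Ioo fun θ ⟨hθ₀, hθπ⟩ =>
            exp_neg_mul_cosParam_le hab.le hlam.le (abs_le.2 ⟨by linarith, hθπ.le⟩)
        exact (((continuous_cosParam a b).const_mul (-lam)).rexp.integrableOn_Icc).mono_set
          Ioo_subset_Icc_self
    _ ≤ exp (-lam * a) * (√(π / k) / 2) := by
        rw [integral_const_mul]
        gcongr
        exact setIntegral_exp_neg_mul_sq_le hk Ioo_subset_Ioi_self
    _ = √(π ^ 3 / (4 * lam * (b - a))) * exp (-lam * a) := by
        rw [show π ^ 3 / (4 * lam * (b - a)) = (π / k) / 2 ^ 2 by unfold k; field_simp; ring,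
          sqrt_div (by positivity : 0 ≤ π / k), sqrt_sq zero_le_two, mul_comm]
end

section
/- Suppose g : O → ℝ, h : [0,T] × O → ℝ, V : [0,T] × O → (0,∞) are measurable, X and Z are measurable stochastic processes with E[V(s, X^x_{t,s}) ⦀Z^x_{t,s}⦀] ≤ (c/√(s−t)) V(t,x) for all 0 ≤ t < s ≤ T and x ∈ O, and there is α ≥ 0 with |g(x)| ≤ α V(T,x) and |h(t,x)| √(T−t) ≤ α V(t,x) for all t ∈ [0,T), x ∈ O. Then for all t ∈ [0,T) and x ∈ O: E[|g(X^x_{t,T})| ⦀Z^x_{t,T}⦀ + ∫_t^T |h(r, X^x_{t,r})| ⦀Z^x_{t,r}⦀ dr] ≤ α c (1/√(T−t) + π) V(t,x) < ∞. -/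
/-! The terminal term is bounded by `α c V(t,x) / √(T - t)` by pulling `|g| ≤ α V(T, ·)` out of the
expectation and applying the moment bound at `s = T`. For the running term, Tonelli exchanges
the two integrals, and the same argument at each time `r` bounds the integrand by
`α c V(t,x) / √((T - r)(r - t))`, whose integral over `(t, T)` is `α c V(t,x) π` because
`arcsin ((2r - t - T) / (T - t))` is an antiderivative. -/

open MeasureTheory Real Set
open scoped ENNReal

theorem hasDerivAt_arcsin_affine {a b r : ℝ} (hr : r ∈ Ioo a b) :
    HasDerivAt (fun s ↦ arcsin ((2 * s - a - b) / (b - a))) (√(b - r) * √(r - a))⁻¹ r := by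
  obtain ⟨har, hrb⟩ := hr
  have hba : 0 < b - a := by linarith
  have hu : HasDerivAt (fun s ↦ (2 * s - a - b) / (b - a)) (2 / (b - a)) r := by
    simpa using ((((hasDerivAt_id r).const_mul 2).sub_const a).sub_const b).div_const (b - a)
  have hlt : -1 < (2 * r - a - b) / (b - a) := by rw [lt_div_iff₀ hba]; linarith
  have hgt : (2 * r - a - b) / (b - a) < 1 := by rw [div_lt_iff₀ hba]; linarith
  refine ((hasDerivAt_arcsin hlt.ne' hgt.ne).comp r hu).congr_deriv ?_
  have hsq : 1 - ((2 * r - a - b) / (b - a)) ^ 2 = (2 * √(b - r) * √(r - a) / (b - a)) ^ 2 := by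
    simp only [div_pow, mul_pow]
    rw [sq_sqrt (by linarith), sq_sqrt (by linarith)]
    field_simp
    ring
  have hbr : 0 < √(b - r) := sqrt_pos.2 (by linarith)
  have hra : 0 < √(r - a) := sqrt_pos.2 (by linarith)
  rw [hsq, sqrt_sq (by positivity)]
  field_simp

theorem integrableOn_inv_sqrt_mul_sqrt {a b : ℝ} :
    IntegrableOn (fun r ↦ (√(b - r) * √(r - a))⁻¹) (Ioc a b) :=
  intervalIntegral.integrableOn_deriv_of_nonneg (by fun_prop)
    (fun _ hr ↦ hasDerivAt_arcsin_affine hr) (fun _ _ ↦ by positivity)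

theorem integral_inv_sqrt_mul_sqrt {a b : ℝ} (hab : a < b) :
    ∫ r in a..b, (√(b - r) * √(r - a))⁻¹ = π := by
  have hba : b - a ≠ 0 := by linarith
  rw [intervalIntegral.integral_eq_sub_of_hasDerivAt_of_le hab.le (by fun_prop)
    (fun _ hr ↦ hasDerivAt_arcsin_affine hr)
    ((intervalIntegrable_iff_integrableOn_Ioc_of_le hab.le).2 integrableOn_inv_sqrt_mul_sqrt),
    show (2 * b - a - b) / (b - a) = 1 by field_simp; ring,
    show (2 * a - a - b) / (b - a) = -1 by field_simp; ring, arcsin_one, arcsin_neg_one]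
  ring

theorem setLIntegral_div_sqrt_mul_sqrt {a b k : ℝ} (hab : a < b) (hk : 0 ≤ k) :
    ∫⁻ r in Ioo a b, ENNReal.ofReal (k / (√(b - r) * √(r - a))) = ENNReal.ofReal (k * π) := by
  simp_rw [div_eq_mul_inv, ENNReal.ofReal_mul hk]
  rw [lintegral_const_mul' _ _ ENNReal.ofReal_ne_top, setLIntegral_congr Ioo_ae_eq_Ioc,
    ← ofReal_integral_eq_lintegral_ofReal integrableOn_inv_sqrt_mul_sqrt
      (ae_of_all _ fun _ ↦ by positivity),
    ← intervalIntegral.integral_of_le hab.le, integral_inv_sqrt_mul_sqrt hab]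

theorem lintegral_ofReal_le_mul_of_le_mul {Ω : Type*} [MeasurableSpace Ω] {μ : Measure Ω}
    {f G : Ω → ℝ} {a B : ℝ} (ha : 0 ≤ a) (hfG : ∀ ω, f ω ≤ a * G ω)
    (hG : ∫⁻ ω, ENNReal.ofReal (G ω) ∂μ ≤ ENNReal.ofReal B) :
    ∫⁻ ω, ENNReal.ofReal (f ω) ∂μ ≤ ENNReal.ofReal (a * B) :=
  calc ∫⁻ ω, ENNReal.ofReal (f ω) ∂μ
      ≤ ∫⁻ ω, ENNReal.ofReal a * ENNReal.ofReal (G ω) ∂μ :=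
        lintegral_mono fun ω ↦ by
          rw [← ENNReal.ofReal_mul ha]; exact ENNReal.ofReal_le_ofReal (hfG ω)
    _ = ENNReal.ofReal a * ∫⁻ ω, ENNReal.ofReal (G ω) ∂μ :=
        lintegral_const_mul' _ _ ENNReal.ofReal_ne_top
    _ ≤ ENNReal.ofReal a * ENNReal.ofReal B := by gcongr
    _ = ENNReal.ofReal (a * B) := (ENNReal.ofReal_mul ha).symm

theorem lintegral_setLIntegral_le_mul_pi {Ω : Type*} [MeasurableSpace Ω] {μ : Measure Ω}
    [SFinite μ] {F : ℝ → Ω → ℝ≥0∞} (hF : Measurable (Function.uncurry F)) {a b k : ℝ}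
    (hab : a < b) (hk : 0 ≤ k)
    (hbound : ∀ r ∈ Ioo a b, ∫⁻ ω, F r ω ∂μ ≤ ENNReal.ofReal (k / (√(b - r) * √(r - a)))) :
    ∫⁻ ω, (∫⁻ r in Ioc a b, F r ω) ∂μ ≤ ENNReal.ofReal (k * π) := by
  rw [lintegral_lintegral_swap (f := fun ω r ↦ F r ω) (hF.comp measurable_swap).aemeasurable,
    setLIntegral_congr Ioo_ae_eq_Ioc.symm, ← setLIntegral_div_sqrt_mul_sqrt hab hk]
  exact setLIntegral_mono' measurableSet_Ioo hbound

theorem sfpe_integrability_general (d m : ℕ) (c T : ℝ) (hc : 0 < c)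
    (O : Set (EuclideanSpace ℝ (Fin d)))
    {Ω : Type*} [MeasurableSpace Ω] (P : Measure Ω) [IsProbabilityMeasure P]
    (X : ℝ → EuclideanSpace ℝ (Fin d) → ℝ → Ω → EuclideanSpace ℝ (Fin d))
    (Z : ℝ → EuclideanSpace ℝ (Fin d) → ℝ → Ω → EuclideanSpace ℝ (Fin m))
    (hXO : ∀ t x s ω, X t x s ω ∈ O)
    (hXmeas : ∀ t x, Measurable (Function.uncurry (X t x)))
    (hZmeas : ∀ t x, Measurable (Function.uncurry (Z t x)))
    (g : EuclideanSpace ℝ (Fin d) → ℝ) (hg : Measurable g)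
    (h : ℝ → EuclideanSpace ℝ (Fin d) → ℝ) (hh : Measurable (Function.uncurry h))
    (V : ℝ → EuclideanSpace ℝ (Fin d) → ℝ)
    (hVpos : ∀ t x, 0 < V t x)
    (hmom : ∀ t s x, 0 ≤ t → t < s → s ≤ T → x ∈ O →
      (∫⁻ ω, ENNReal.ofReal (V s (X t x s ω) * ‖Z t x s ω‖) ∂P)
        ≤ ENNReal.ofReal (c / Real.sqrt (s - t) * V t x))
    (α : ℝ) (hα : 0 ≤ α)
    (hgb : ∀ x ∈ O, |g x| ≤ α * V T x)
    (hhb : ∀ t ∈ Set.Ico (0:ℝ) T, ∀ x ∈ O, |h t x| * Real.sqrt (T - t) ≤ α * V t x)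
    (t : ℝ) (ht : t ∈ Set.Ico (0:ℝ) T) (x : EuclideanSpace ℝ (Fin d)) (hx : x ∈ O) :
    (∫⁻ ω, (ENNReal.ofReal (|g (X t x T ω)| * ‖Z t x T ω‖)
        + ∫⁻ r in Set.Ioc t T, ENNReal.ofReal (|h r (X t x r ω)| * ‖Z t x r ω‖)) ∂P)
      ≤ ENNReal.ofReal (α * c * (1 / Real.sqrt (T - t) + Real.pi) * V t x)
    ∧ (∫⁻ ω, (ENNReal.ofReal (|g (X t x T ω)| * ‖Z t x T ω‖)
        + ∫⁻ r in Set.Ioc t T, ENNReal.ofReal (|h r (X t x r ω)| * ‖Z t x r ω‖)) ∂P) < ⊤ := by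
  obtain ⟨ht0, htT⟩ := ht
  have hV := (hVpos t x).le
  have terminal : ∫⁻ ω, ENNReal.ofReal (|g (X t x T ω)| * ‖Z t x T ω‖) ∂P
      ≤ ENNReal.ofReal (α * (c / √(T - t) * V t x)) :=
    lintegral_ofReal_le_mul_of_le_mul hα
      (fun ω ↦ by rw [← mul_assoc]; gcongr; exact hgb _ (hXO t x T ω))
      (hmom t T x ht0 htT le_rfl hx)
  have running : ∀ r ∈ Ioo t T, ∫⁻ ω, ENNReal.ofReal (|h r (X t x r ω)| * ‖Z t x r ω‖) ∂P
      ≤ ENNReal.ofReal (α * c * V t x / (√(T - r) * √(r - t))) := by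
    rintro r ⟨htr, hrT⟩
    have hsqrt : 0 < √(T - r) := sqrt_pos.2 (by linarith)
    have hh_le : ∀ y ∈ O, |h r y| ≤ α / √(T - r) * V r y := fun y hy ↦ by
      rw [div_mul_eq_mul_div, le_div_iff₀ hsqrt]; exact hhb r ⟨by linarith, hrT⟩ y hy
    refine (lintegral_ofReal_le_mul_of_le_mul (a := α / √(T - r)) (by positivity)
      (fun ω ↦ by rw [← mul_assoc]; gcongr; exact hh_le _ (hXO t x r ω))
      (hmom t r x ht0 htr hrT.le hx)).trans_eq ?_
    congr 1; ring
  have bound := calc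
    _ = ∫⁻ ω, ENNReal.ofReal (|g (X t x T ω)| * ‖Z t x T ω‖) ∂P
        + ∫⁻ ω, (∫⁻ r in Ioc t T, ENNReal.ofReal (|h r (X t x r ω)| * ‖Z t x r ω‖)) ∂P :=
      lintegral_add_left ((hg.comp ((hXmeas t x).comp measurable_prodMk_left)).abs.mul
        ((hZmeas t x).comp measurable_prodMk_left).norm).ennreal_ofReal _
    _ ≤ ENNReal.ofReal (α * (c / √(T - t) * V t x)) + ENNReal.ofReal (α * c * V t x * π) :=
      add_le_add terminal <| lintegral_setLIntegral_le_mul_pi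
        ((hh.comp (measurable_fst.prodMk (hXmeas t x))).abs.mul (hZmeas t x).norm).ennreal_ofReal
        htT (by positivity) running
    _ = ENNReal.ofReal (α * c * (1 / √(T - t) + π) * V t x) := by
      rw [← ENNReal.ofReal_add (by positivity) (by positivity)]
      congr 1; ring
  exact ⟨bound, bound.trans_lt ENNReal.ofReal_lt_top⟩

theorem sfpe_integrability (d m : ℕ) (c T : ℝ) (hc : 0 < c) (hT : 0 < T)
    (O : Set (EuclideanSpace ℝ (Fin d))) (hO : IsOpen O) (hOne : O.Nonempty)
    {Ω : Type*} [MeasurableSpace Ω] (P : Measure Ω) [IsProbabilityMeasure P]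
    (X : ℝ → EuclideanSpace ℝ (Fin d) → ℝ → Ω → EuclideanSpace ℝ (Fin d))
    (Z : ℝ → EuclideanSpace ℝ (Fin d) → ℝ → Ω → EuclideanSpace ℝ (Fin m))
    (hXO : ∀ t x s ω, X t x s ω ∈ O)
    (hXmeas : ∀ t x, Measurable (Function.uncurry (X t x)))
    (hZmeas : ∀ t x, Measurable (Function.uncurry (Z t x)))
    (g : EuclideanSpace ℝ (Fin d) → ℝ) (hg : Measurable g)
    (h : ℝ → EuclideanSpace ℝ (Fin d) → ℝ) (hh : Measurable (Function.uncurry h))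
    (V : ℝ → EuclideanSpace ℝ (Fin d) → ℝ) (hV : Measurable (Function.uncurry V))
    (hVpos : ∀ t x, 0 < V t x)
    (hmom : ∀ t s x, 0 ≤ t → t < s → s ≤ T → x ∈ O →
      (∫⁻ ω, ENNReal.ofReal (V s (X t x s ω) * ‖Z t x s ω‖) ∂P)
        ≤ ENNReal.ofReal (c / Real.sqrt (s - t) * V t x))
    (α : ℝ) (hα : 0 ≤ α)
    (hgb : ∀ x ∈ O, |g x| ≤ α * V T x)
    (hhb : ∀ t ∈ Set.Ico (0:ℝ) T, ∀ x ∈ O, |h t x| * Real.sqrt (T - t) ≤ α * V t x)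
    (t : ℝ) (ht : t ∈ Set.Ico (0:ℝ) T) (x : EuclideanSpace ℝ (Fin d)) (hx : x ∈ O) :
    (∫⁻ ω, (ENNReal.ofReal (|g (X t x T ω)| * ‖Z t x T ω‖)
        + ∫⁻ r in Set.Ioc t T, ENNReal.ofReal (|h r (X t x r ω)| * ‖Z t x r ω‖)) ∂P)
      ≤ ENNReal.ofReal (α * c * (1 / Real.sqrt (T - t) + Real.pi) * V t x)
    ∧ (∫⁻ ω, (ENNReal.ofReal (|g (X t x T ω)| * ‖Z t x T ω‖)
        + ∫⁻ r in Set.Ioc t T, ENNReal.ofReal (|h r (X t x r ω)| * ‖Z t x r ω‖)) ∂P) < ⊤ :=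
  sfpe_integrability_general d m c T hc O P X Z hXO hXmeas hZmeas g hg h hh V hVpos hmom α hα hgb
    hhb t ht x hx
end

section
/- Assume the setting of abstract SFPEs with weight V and processes X, Z satisfying E[V(s, X^x_{t,s}) ⦀Z^x_{t,s}⦀] ≤ (c/√(s−t)) V(t,x). Let f : [0,T) × O × ℝ^m → ℝ be measurable and Lipschitz in the last variable with constant L; let v, w : [0,T) × O → ℝ^m be measurable with sup_{t,x} (⦀v(t,x)⦀ + ⦀w(t,x)⦀)/V(t,x) · √(T−t) < ∞. Then for all λ > 0, t ∈ [0,T), x ∈ O: E[∫_t^T |f(r, X^x_{t,r}, v(r, X^x_{t,r})) − f(r, X^x_{t,r}, w(r, X^x_{t,r}))| ⦀Z^x_{t,r}⦀ dr] ≤ cL √(π³/(4λ(T−t))) V(t,x) e^{−λt} · sup_{s,y} (e^{λs} ⦀v(s,y) − w(s,y)⦀ / V(s,y)) √(T−s). -/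
open MeasureTheory Real Set

/-! By Tonelli and the Lipschitz bound, the time slice at `r` contributes at most
`c L S V(t,x) e^{-λr} / (√(r-t) √(T-r))`, using the moment estimate for `V(r, X) ⦀Z⦀` and
`⦀v - w⦀(r, ·) ≤ S e^{-λr} V(r, ·) / √(T-r)`. The substitution `r = t + (T-t) sin² θ` turns the
remaining singular integral into `2 e^{-λt} ∫₀^{π/2} e^{-λ(T-t) sin² θ} dθ`, and Jordan's
inequality `sin θ ≥ 2θ/π` bounds this by a half-line Gaussian integral, which equals
`√(π³ / (4λ(T-t))) e^{-λt}`. -/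

lemma monotoneOn_sin_sq : MonotoneOn (fun θ => sin θ ^ 2) (Icc 0 (π / 2)) := by
  intro a ha b hb hab
  have hsin : sin a ≤ sin b :=
    strictMonoOn_sin.monotoneOn ⟨by linarith [pi_pos, ha.1], ha.2⟩
      ⟨by linarith [pi_pos, hb.1], hb.2⟩ hab
  have ha0 : 0 ≤ sin a := sin_nonneg_of_nonneg_of_le_pi ha.1 (by linarith [pi_pos, ha.2])
  exact pow_le_pow_left₀ ha0 hsin 2

lemma lintegral_Ioo_eq_lintegral_sin_sq_subst (t : ℝ) {τ : ℝ} (hτ : 0 ≤ τ) (g : ℝ → ENNReal) :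
    ∫⁻ r in Ioo t (t + τ), g r
      = ∫⁻ θ in Ioo 0 (π / 2),
          ENNReal.ofReal (τ * (2 * sin θ * cos θ)) * g (t + τ * sin θ ^ 2) := by
  have hderiv : ∀ θ, HasDerivAt (fun θ => t + τ * sin θ ^ 2) (τ * (2 * sin θ * cos θ)) θ :=
    fun θ => ((((hasDerivAt_sin θ).fun_pow 2).const_mul τ).const_add t).congr_deriv (by norm_num)
  have hmono : MonotoneOn (fun θ => t + τ * sin θ ^ 2) (Icc 0 (π / 2)) :=
    fun a ha b hb hab => by
      simpa using mul_le_mul_of_nonneg_left (monotoneOn_sin_sq ha hb hab) hτ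
  have himage : (fun θ => t + τ * sin θ ^ 2) '' Icc 0 (π / 2) = Icc t (t + τ) := by
    rw [ContinuousOn.image_Icc_of_monotoneOn (by positivity) (by fun_prop) hmono]
    simp
  rw [setLIntegral_congr Ioo_ae_eq_Icc, ← himage,
    lintegral_image_eq_lintegral_deriv_mul_of_monotoneOn measurableSet_Icc
      (fun θ _ => (hderiv θ).hasDerivWithinAt) hmono,
    setLIntegral_congr Ioo_ae_eq_Icc]

lemma exp_neg_mul_sin_sq_le {a θ : ℝ} (ha : 0 ≤ a) (hθ : θ ∈ Icc 0 (π / 2)) :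
    exp (-a * sin θ ^ 2) ≤ exp (-(4 * a / π ^ 2) * θ ^ 2) := by
  have hjordan : 2 / π * θ ≤ sin θ := mul_le_sin hθ.1 hθ.2
  have hsq : (2 / π * θ) ^ 2 ≤ sin θ ^ 2 :=
    pow_le_pow_left₀ (mul_nonneg (div_nonneg zero_le_two pi_pos.le) hθ.1) hjordan 2
  have : 4 * a / π ^ 2 * θ ^ 2 = a * (2 / π * θ) ^ 2 := by field_simp; ring
  rw [exp_le_exp, neg_mul, neg_mul, neg_le_neg_iff, this]
  exact mul_le_mul_of_nonneg_left hsq ha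

lemma lintegral_Ioi_exp_neg_mul_sq {b : ℝ} (hb : 0 < b) :
    ∫⁻ θ in Ioi 0, ENNReal.ofReal (exp (-b * θ ^ 2)) = ENNReal.ofReal (√(π / b) / 2) := by
  rw [← ofReal_integral_eq_lintegral_ofReal (integrable_exp_neg_mul_sq hb).integrableOn
    (Filter.Eventually.of_forall fun θ => (exp_pos _).le), integral_gaussian_Ioi]

lemma ofReal_mul_exp_div_sqrt_mul_sqrt_sin_sq_subst {lam t τ θ : ℝ} (hτ : 0 < τ)
    (hθ : θ ∈ Ioo 0 (π / 2)) :
    ENNReal.ofReal (τ * (2 * sin θ * cos θ)) * ENNReal.ofReal (exp (-lam * (t + τ * sin θ ^ 2))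
        / (√(t + τ * sin θ ^ 2 - t) * √(t + τ - (t + τ * sin θ ^ 2))))
      = ENNReal.ofReal (2 * exp (-lam * t)) * ENNReal.ofReal (exp (-(lam * τ) * sin θ ^ 2)) := by
  have hsin : 0 < sin θ := sin_pos_of_pos_of_lt_pi hθ.1 (by linarith [hθ.2, pi_pos])
  have hcos : 0 < cos θ := cos_pos_of_mem_Ioo ⟨by linarith [hθ.1, pi_pos], hθ.2⟩
  have h1 : √(t + τ * sin θ ^ 2 - t) = √τ * sin θ := by
    rw [add_sub_cancel_left, sqrt_mul hτ.le, sqrt_sq hsin.le]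
  have h2 : √(t + τ - (t + τ * sin θ ^ 2)) = √τ * cos θ := by
    rw [show t + τ - (t + τ * sin θ ^ 2) = τ * cos θ ^ 2 by rw [cos_sq']; ring,
      sqrt_mul hτ.le, sqrt_sq hcos.le]
  have hexp : exp (-lam * (t + τ * sin θ ^ 2)) = exp (-lam * t) * exp (-(lam * τ) * sin θ ^ 2) := by
    rw [← exp_add]; ring_nf
  have hprod : √τ * sin θ * (√τ * cos θ) = τ * (sin θ * cos θ) := by
    linear_combination (sin θ * cos θ) * mul_self_sqrt hτ.le
  rw [← ENNReal.ofReal_mul (by positivity), ← ENNReal.ofReal_mul (by positivity),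
    h1, h2, hexp, hprod]
  congr 1
  field_simp

lemma lintegral_exp_div_sqrt_mul_sqrt_le {lam t T : ℝ} (hlam : 0 < lam) (htT : t < T) :
    ∫⁻ r in Ioo t T, ENNReal.ofReal (exp (-lam * r) / (√(r - t) * √(T - r)))
      ≤ ENNReal.ofReal (√(π ^ 3 / (4 * lam * (T - t))) * exp (-lam * t)) := by
  obtain ⟨τ, hτ, rfl⟩ : ∃ τ, 0 < τ ∧ T = t + τ := ⟨T - t, by linarith, by ring⟩
  have hb : 0 < 4 * (lam * τ) / π ^ 2 := by positivity
  calc ∫⁻ r in Ioo t (t + τ), ENNReal.ofReal (exp (-lam * r) / (√(r - t) * √(t + τ - r)))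
      = ∫⁻ θ in Ioo 0 (π / 2),
          ENNReal.ofReal (2 * exp (-lam * t)) * ENNReal.ofReal (exp (-(lam * τ) * sin θ ^ 2)) := by
        rw [lintegral_Ioo_eq_lintegral_sin_sq_subst t hτ.le]
        exact setLIntegral_congr_fun measurableSet_Ioo fun θ hθ =>
          ofReal_mul_exp_div_sqrt_mul_sqrt_sin_sq_subst hτ hθ
    _ ≤ ∫⁻ θ in Ioi 0, ENNReal.ofReal (2 * exp (-lam * t))
          * ENNReal.ofReal (exp (-(4 * (lam * τ) / π ^ 2) * θ ^ 2)) :=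
        (setLIntegral_mono' measurableSet_Ioo fun θ hθ => mul_le_mul_right
          (ENNReal.ofReal_le_ofReal (exp_neg_mul_sin_sq_le (by positivity)
            (Ioo_subset_Icc_self hθ))) _).trans (lintegral_mono_set Ioo_subset_Ioi_self)
    _ = ENNReal.ofReal (2 * exp (-lam * t))
          * ENNReal.ofReal (√(π / (4 * (lam * τ) / π ^ 2)) / 2) := by
        rw [lintegral_const_mul' _ _ ENNReal.ofReal_ne_top, lintegral_Ioi_exp_neg_mul_sq hb]
    _ = ENNReal.ofReal (√(π ^ 3 / (4 * lam * (t + τ - t))) * exp (-lam * t)) := by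
        rw [← ENNReal.ofReal_mul (by positivity), add_sub_cancel_left]
        congr 1
        field_simp

lemma lintegral_setLIntegral_Ioc_le {Ω : Type*} [MeasurableSpace Ω] (P : Measure Ω) [SFinite P]
    {F : ℝ → Ω → ENNReal} (hF : Measurable (Function.uncurry F)) {g : ℝ → ENNReal} {t T : ℝ}
    (h : ∀ r ∈ Ioo t T, ∫⁻ ω, F r ω ∂P ≤ g r) :
    ∫⁻ ω, (∫⁻ r in Ioc t T, F r ω) ∂P ≤ ∫⁻ r in Ioo t T, g r := by
  rw [lintegral_lintegral_swap (f := fun ω r => F r ω) (hF.comp measurable_swap).aemeasurable,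
    setLIntegral_congr Ioo_ae_eq_Ioc.symm]
  exact setLIntegral_mono' measurableSet_Ioo h

lemma le_div_mul_of_mul_div_mul_le {a p q V S : ℝ} (hp : 0 < p) (hq : 0 < q) (hV : 0 < V)
    (h : p * a / V * q ≤ S) : a ≤ S / (p * q) * V := by
  rw [div_mul_eq_mul_div, le_div_iff₀ (mul_pos hp hq)]
  rw [div_mul_eq_mul_div, div_le_iff₀ hV] at h
  linarith

lemma lintegral_abs_sub_mul_norm_le_of_lipschitz {Ω E F G : Type*} [MeasurableSpace Ω]
    [SeminormedAddCommGroup F] [SeminormedAddCommGroup G] (P : Measure Ω) {O : Set E}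
    {X : Ω → E} {Z : Ω → G} {V : E → ℝ} {f : E → F → ℝ} {v w : E → F} {L lam r T S M : ℝ}
    (hL : 0 ≤ L) (hS : 0 ≤ S) (hrT : r < T) (hXO : ∀ ω, X ω ∈ O) (hV : ∀ y, 0 < V y)
    (hLip : ∀ y ∈ O, ∀ a b, |f y a - f y b| ≤ L * ‖a - b‖)
    (hvw : ∀ y ∈ O, exp (lam * r) * ‖v y - w y‖ / V y * √(T - r) ≤ S)
    (hmom : ∫⁻ ω, ENNReal.ofReal (V (X ω) * ‖Z ω‖) ∂P ≤ ENNReal.ofReal M) :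
    ∫⁻ ω, ENNReal.ofReal (|f (X ω) (v (X ω)) - f (X ω) (w (X ω))| * ‖Z ω‖) ∂P
      ≤ ENNReal.ofReal (L * (S / (exp (lam * r) * √(T - r)))) * ENNReal.ofReal M := by
  have hsqrt : 0 < √(T - r) := sqrt_pos.2 (sub_pos.2 hrT)
  have hK : 0 ≤ L * (S / (exp (lam * r) * √(T - r))) := by positivity
  calc ∫⁻ ω, ENNReal.ofReal (|f (X ω) (v (X ω)) - f (X ω) (w (X ω))| * ‖Z ω‖) ∂P
      ≤ ∫⁻ ω, ENNReal.ofReal (L * (S / (exp (lam * r) * √(T - r))))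
          * ENNReal.ofReal (V (X ω) * ‖Z ω‖) ∂P := lintegral_mono fun ω => ?_
    _ = ENNReal.ofReal (L * (S / (exp (lam * r) * √(T - r))))
          * ∫⁻ ω, ENNReal.ofReal (V (X ω) * ‖Z ω‖) ∂P :=
        lintegral_const_mul' _ _ ENNReal.ofReal_ne_top
    _ ≤ _ := mul_le_mul_right hmom _
  rw [← ENNReal.ofReal_mul hK, ← mul_assoc]
  refine ENNReal.ofReal_le_ofReal (mul_le_mul_of_nonneg_right ?_ (norm_nonneg _))
  rw [mul_assoc]
  exact (hLip _ (hXO ω) _ _).trans (mul_le_mul_of_nonneg_left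
    (le_div_mul_of_mul_div_mul_le (exp_pos _) hsqrt (hV _) (hvw _ (hXO ω))) hL)

theorem sfpe_contractivity_general (d m : ℕ) (c L T : ℝ) (hL : 0 < L)
    (O : Set (EuclideanSpace ℝ (Fin d)))
    {Ω : Type*} [MeasurableSpace Ω] (P : Measure Ω) [IsProbabilityMeasure P]
    (X : ℝ → EuclideanSpace ℝ (Fin d) → ℝ → Ω → EuclideanSpace ℝ (Fin d))
    (Z : ℝ → EuclideanSpace ℝ (Fin d) → ℝ → Ω → EuclideanSpace ℝ (Fin m))
    (hXO : ∀ t x s ω, X t x s ω ∈ O)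
    (hXmeas : ∀ t x, Measurable (Function.uncurry (X t x)))
    (hZmeas : ∀ t x, Measurable (Function.uncurry (Z t x)))
    (V : ℝ → EuclideanSpace ℝ (Fin d) → ℝ)
    (hVpos : ∀ t x, 0 < V t x)
    (hmom : ∀ t s x, 0 ≤ t → t < s → s ≤ T → x ∈ O →
      (∫⁻ ω, ENNReal.ofReal (V s (X t x s ω) * ‖Z t x s ω‖) ∂P)
        ≤ ENNReal.ofReal (c / Real.sqrt (s - t) * V t x))
    (f : ℝ → EuclideanSpace ℝ (Fin d) → EuclideanSpace ℝ (Fin m) → ℝ)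
    (hfmeas : Measurable (fun p : ℝ × EuclideanSpace ℝ (Fin d) × EuclideanSpace ℝ (Fin m) =>
      f p.1 p.2.1 p.2.2))
    (hLip : ∀ t ∈ Set.Ico (0:ℝ) T, ∀ x ∈ O, ∀ y z : EuclideanSpace ℝ (Fin m),
      |f t x y - f t x z| ≤ L * ‖y - z‖)
    (v w : ℝ → EuclideanSpace ℝ (Fin d) → EuclideanSpace ℝ (Fin m))
    (hvmeas : Measurable (Function.uncurry v)) (hwmeas : Measurable (Function.uncurry w)) :
    ∀ lam > (0:ℝ), ∀ t ∈ Set.Ico (0:ℝ) T, ∀ x ∈ O,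
      ∀ S : ℝ, (∀ s ∈ Set.Ico (0:ℝ) T, ∀ y ∈ O,
        Real.exp (lam * s) * ‖v s y - w s y‖ / V s y * Real.sqrt (T - s) ≤ S) →
      (∫⁻ ω, (∫⁻ r in Set.Ioc t T,
          ENNReal.ofReal (|f r (X t x r ω) (v r (X t x r ω))
            - f r (X t x r ω) (w r (X t x r ω))| * ‖Z t x r ω‖)) ∂P)
        ≤ ENNReal.ofReal (c * L * Real.sqrt (Real.pi ^ 3 / (4 * lam * (T - t)))
            * V t x * Real.exp (-lam * t) * S) := by
  intro lam hlam t ⟨ht0, htT⟩ x hx S hS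
  have hXt : Measurable fun p : ℝ × Ω => (p.1, X t x p.1 p.2) :=
    measurable_fst.prodMk (hXmeas t x)
  have hfu : ∀ u : ℝ → EuclideanSpace ℝ (Fin d) → EuclideanSpace ℝ (Fin m),
      Measurable (Function.uncurry u) →
      Measurable fun p : ℝ × Ω => f p.1 (X t x p.1 p.2) (u p.1 (X t x p.1 p.2)) :=
    fun u hu => hfmeas.comp (measurable_fst.prodMk ((hXmeas t x).prodMk (hu.comp hXt)))
  have hS0 : 0 ≤ S := (mul_nonneg (div_nonneg (by positivity) (hVpos t x).le)
    (sqrt_nonneg _)).trans (hS t ⟨ht0, htT⟩ x hx)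
  have hslice : ∀ r ∈ Ioo t T, ∫⁻ ω, ENNReal.ofReal (|f r (X t x r ω) (v r (X t x r ω))
        - f r (X t x r ω) (w r (X t x r ω))| * ‖Z t x r ω‖) ∂P
      ≤ ENNReal.ofReal (c * L * V t x * S)
        * ENNReal.ofReal (exp (-lam * r) / (√(r - t) * √(T - r))) := by
    intro r ⟨htr, hrT⟩
    have hr : r ∈ Ico 0 T := ⟨ht0.trans htr.le, hrT⟩
    refine (lintegral_abs_sub_mul_norm_le_of_lipschitz P hL.le hS0 hrT (hXO t x r) (hVpos r)
      (hLip r hr) (hS r hr) (hmom t r x ht0 htr hrT.le hx)).trans_eq ?_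
    rw [← ENNReal.ofReal_mul (by positivity), ← ENNReal.ofReal_mul' (by positivity), neg_mul,
      exp_neg]
    congr 1
    field_simp
  calc _ ≤ ∫⁻ r in Ioo t T, ENNReal.ofReal (c * L * V t x * S)
          * ENNReal.ofReal (exp (-lam * r) / (√(r - t) * √(T - r))) := by
        refine lintegral_setLIntegral_Ioc_le P ?_ hslice
        exact (((hfu v hvmeas).sub (hfu w hwmeas)).abs.mul (hZmeas t x).norm).ennreal_ofReal
    _ ≤ ENNReal.ofReal (c * L * V t x * S)
          * ENNReal.ofReal (√(π ^ 3 / (4 * lam * (T - t))) * exp (-lam * t)) := by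
        rw [lintegral_const_mul' _ _ ENNReal.ofReal_ne_top]
        exact mul_le_mul_right (lintegral_exp_div_sqrt_mul_sqrt_le hlam htT) _
    _ = ENNReal.ofReal (c * L * √(π ^ 3 / (4 * lam * (T - t))) * V t x * exp (-lam * t) * S) := by
        rw [← ENNReal.ofReal_mul' (by positivity)]
        ring_nf

theorem sfpe_contractivity (d m : ℕ) (c L T : ℝ) (hc : 0 < c) (hL : 0 < L) (hT : 0 < T)
    (O : Set (EuclideanSpace ℝ (Fin d))) (hO : IsOpen O) (hOne : O.Nonempty)
    {Ω : Type*} [MeasurableSpace Ω] (P : Measure Ω) [IsProbabilityMeasure P]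
    (X : ℝ → EuclideanSpace ℝ (Fin d) → ℝ → Ω → EuclideanSpace ℝ (Fin d))
    (Z : ℝ → EuclideanSpace ℝ (Fin d) → ℝ → Ω → EuclideanSpace ℝ (Fin m))
    (hXO : ∀ t x s ω, X t x s ω ∈ O)
    (hXmeas : ∀ t x, Measurable (Function.uncurry (X t x)))
    (hZmeas : ∀ t x, Measurable (Function.uncurry (Z t x)))
    (V : ℝ → EuclideanSpace ℝ (Fin d) → ℝ)
    (hVcont : ContinuousOn (Function.uncurry V) (Set.Icc 0 T ×ˢ O))
    (hVpos : ∀ t x, 0 < V t x)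
    (hmom : ∀ t s x, 0 ≤ t → t < s → s ≤ T → x ∈ O →
      (∫⁻ ω, ENNReal.ofReal (V s (X t x s ω) * ‖Z t x s ω‖) ∂P)
        ≤ ENNReal.ofReal (c / Real.sqrt (s - t) * V t x))
    (f : ℝ → EuclideanSpace ℝ (Fin d) → EuclideanSpace ℝ (Fin m) → ℝ)
    (hfmeas : Measurable (fun p : ℝ × EuclideanSpace ℝ (Fin d) × EuclideanSpace ℝ (Fin m) =>
      f p.1 p.2.1 p.2.2))
    (hLip : ∀ t ∈ Set.Ico (0:ℝ) T, ∀ x ∈ O, ∀ y z : EuclideanSpace ℝ (Fin m),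
      |f t x y - f t x z| ≤ L * ‖y - z‖)
    (v w : ℝ → EuclideanSpace ℝ (Fin d) → EuclideanSpace ℝ (Fin m))
    (hvmeas : Measurable (Function.uncurry v)) (hwmeas : Measurable (Function.uncurry w))
    (hbdd : ∃ M : ℝ, ∀ t ∈ Set.Ico (0:ℝ) T, ∀ x ∈ O,
      (‖v t x‖ + ‖w t x‖) / V t x * Real.sqrt (T - t) ≤ M) :
    ∀ lam > (0:ℝ), ∀ t ∈ Set.Ico (0:ℝ) T, ∀ x ∈ O,
      ∀ S : ℝ, (∀ s ∈ Set.Ico (0:ℝ) T, ∀ y ∈ O,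
        Real.exp (lam * s) * ‖v s y - w s y‖ / V s y * Real.sqrt (T - s) ≤ S) →
      (∫⁻ ω, (∫⁻ r in Set.Ioc t T,
          ENNReal.ofReal (|f r (X t x r ω) (v r (X t x r ω))
            - f r (X t x r ω) (w r (X t x r ω))| * ‖Z t x r ω‖)) ∂P)
        ≤ ENNReal.ofReal (c * L * Real.sqrt (Real.pi ^ 3 / (4 * lam * (T - t)))
            * V t x * Real.exp (-lam * t) * S) :=
  sfpe_contractivity_general d m c L T hL O P X Z hXO hXmeas hZmeas V hVpos hmom f hfmeas hLip v w
    hvmeas hwmeas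
end
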